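/- arXiv:1606.03897 — 5 statements merged into one kernel-verified Lean document; each statement's English description precedes it below -/
import Mathlib

section
/- In a right-justified alignment, for each string Sʲ, if position q−1 of the transformed string S̃ʲ is empty (a gap) then position q−1 lies inside a ps-region block and the last non-gap position before q in S̃ʲ is the last position of the preceding cs-region. Consequently, for two strings j₁, j₂ whose transformed forms both have position q−1 empty, the last non-gap positions before q coincide. -/
/-!
Every position in a cs-region carries a character in every string, so a run of gaps ending
at `q - 1` lies entirely in odd (ps-)blocks; as the block index grows by at most one per
position, the run sits in a single ps-block. Right-justification forbids a character earlier
in that same block, so the character just before the run closes the preceding cs-block. That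
position is determined by the block structure alone, hence is the same for all strings.
-/

/-- `p` is the last non-gap position before `q` in the transformed string `St`
(`St i = none` means alignment position `i` is a gap). -/
def lastNonGap {α : Type*} (St : ℕ → Option α) (q p : ℕ) : Prop :=
  p < q ∧ St p ≠ none ∧ ∀ r, p < r → r < q → St r = none

theorem eq_of_forall_not_even_of_step {f : ℕ → ℕ}
    (hstep : ∀ i, f (i + 1) = f i ∨ f (i + 1) = f i + 1) {a b : ℕ} (hab : a ≤ b)
    (hodd : ∀ r, a ≤ r → r ≤ b → ¬ Even (f r)) : f a = f b := by
  induction b, hab using Nat.le_induction with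
  | base => rfl
  | succ b hab ih =>
    have hfa : f a = f b := ih fun r har hrb => hodd r har (by omega)
    rcases hstep b with h | h
    · rw [hfa, h]
    · have hb : ¬ Even (f b) := hodd b hab (by omega)
      have hb1 : ¬ Even (f b + 1) := h ▸ hodd (b + 1) (by omega) le_rfl
      exact absurd (Nat.even_add_one.mpr hb) hb1

theorem lastNonGap.le_of_ne_none {α : Type*} {St : ℕ → Option α} {q p p' : ℕ}
    (h : lastNonGap St q p) (hp'q : p' < q) (hp' : St p' ≠ none) : p' ≤ p := by
  by_contra! hlt
  exact hp' (h.2.2 p' hlt hp'q)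

theorem lastNonGap.even_blk_and_blk_pred_eq_succ {α : Type*} {St : ℕ → Option α}
    {blk : ℕ → ℕ} {n q p : ℕ}
    (hstep : ∀ i, blk (i + 1) = blk i ∨ blk (i + 1) = blk i + 1)
    (hcs : ∀ i, i < n → Even (blk i) → St i ≠ none)
    (hrj : ∀ i i', i < n → i' < n → blk i = blk i' →
        ¬ Even (blk i) → i ≤ i' → St i ≠ none → St i' ≠ none)
    (h : lastNonGap St q p) (hqn : q ≤ n) (hgap : St (q - 1) = none) :
    Even (blk p) ∧ blk (q - 1) = blk p + 1 := by
  obtain ⟨hpq, hp, hgaps⟩ := h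
  have hpq' : p < q - 1 := lt_of_le_of_ne (by omega) fun heq => hp (heq ▸ hgap)
  have hrun : blk (p + 1) = blk (q - 1) :=
    eq_of_forall_not_even_of_step hstep (by omega) fun r hpr hrq heven =>
      hcs r (by omega) heven (hgaps r (by omega) (by omega))
  have hodd : ¬ Even (blk (q - 1)) := fun heven => hcs (q - 1) (by omega) heven hgap
  rcases hstep p with hsame | hnext
  · have hblk : blk p = blk (q - 1) := hsame ▸ hrun
    exact absurd hgap (hrj p (q - 1) (by omega) (by omega) hblk (hblk ▸ hodd) hpq'.le hp)
  · rw [← hrun, hnext] at hodd ⊢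
    exact ⟨not_not.mp (Nat.even_add_one.not.mp hodd), rfl⟩

theorem stmt7_general {α : Type*} (m n : ℕ) (Stilde : Fin m → ℕ → Option α)
    (blk : ℕ → ℕ)
    (hstep : ∀ i, blk (i + 1) = blk i ∨ blk (i + 1) = blk i + 1)
    (hcs : ∀ (j : Fin m) i, i < n → Even (blk i) → Stilde j i ≠ none)
    (hrj : ∀ (j : Fin m) i i', i < n → i' < n → blk i = blk i' →
        ¬ Even (blk i) → i ≤ i' → Stilde j i ≠ none → Stilde j i' ≠ none) :
    ∀ (j₁ j₂ : Fin m) (q p₁ p₂ : ℕ), 0 < q → q ≤ n →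
      Stilde j₁ (q - 1) = none → Stilde j₂ (q - 1) = none →
      (¬ Even (blk (q - 1))) ∧
      (lastNonGap (Stilde j₁) q p₁ → lastNonGap (Stilde j₂) q p₂ →
        (Even (blk p₁) ∧ blk (q - 1) = blk p₁ + 1) ∧ p₁ = p₂) := by
  intro j₁ j₂ q p₁ p₂ hq hqn hgap₁ hgap₂
  refine ⟨fun heven => hcs j₁ (q - 1) (by omega) heven hgap₁, fun h₁ h₂ => ?_⟩
  have hblk₁ := h₁.even_blk_and_blk_pred_eq_succ hstep (hcs j₁) (hrj j₁) hqn hgap₁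
  have hblk₂ := h₂.even_blk_and_blk_pred_eq_succ hstep (hcs j₂) (hrj j₂) hqn hgap₂
  refine ⟨hblk₁, le_antisymm ?_ ?_⟩
  · exact h₂.le_of_ne_none h₁.1 (hcs j₂ p₁ (by have := h₁.1; omega) hblk₁.1)
  · exact h₁.le_of_ne_none h₂.1 (hcs j₁ p₂ (by have := h₂.1; omega) hblk₂.1)

/-- Right-justified alignment of `m` strings of total alignment length `n`:
`Stilde j i` is the character of string `j` at alignment position `i`
(`none` = gap).  `blk i` is the index of the block (region) containing
position `i`; blocks are consecutive intervals (`hblk0`, `hstep`), blocks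
alternate between cs-regions (even index: every string has a character) and
ps-regions (odd index).  Right-justification: within a ps-region, gaps precede
characters (`hrj`).

Claim: if `S̃ʲ[q-1]` is a gap then `q-1` lies inside a ps-region, and the last
non-gap position before `q` in `S̃ʲ` is the last position of the preceding
cs-region; consequently, for two strings whose transformed forms both have
position `q-1` empty, the last non-gap positions before `q` coincide. -/
theorem stmt7 {α : Type*} (m n : ℕ) (Stilde : Fin m → ℕ → Option α)
    (blk : ℕ → ℕ)
    (hblk0 : blk 0 = 0)
    (hstep : ∀ i, blk (i + 1) = blk i ∨ blk (i + 1) = blk i + 1)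
    (hcs : ∀ (j : Fin m) i, i < n → Even (blk i) → Stilde j i ≠ none)
    (hrj : ∀ (j : Fin m) i i', i < n → i' < n → blk i = blk i' →
        ¬ Even (blk i) → i ≤ i' → Stilde j i ≠ none → Stilde j i' ≠ none) :
    ∀ (j₁ j₂ : Fin m) (q p₁ p₂ : ℕ), 0 < q → q ≤ n →
      Stilde j₁ (q - 1) = none → Stilde j₂ (q - 1) = none →
      (¬ Even (blk (q - 1))) ∧
      (lastNonGap (Stilde j₁) q p₁ → lastNonGap (Stilde j₂) q p₂ →
        (Even (blk p₁) ∧ blk (q - 1) = blk p₁ + 1) ∧ p₁ = p₂) :=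
  stmt7_general m n Stilde blk hstep hcs hrj
end

section
/- If every suffix in SAA entry i and every suffix in SAA entry i' (i ≠ i') is prefixed by a pattern Q, then for every entry k between i and i' in the SAA, every suffix in SAA[k] is prefixed by Q. -/
/-- Mathlib's `LinearOrder (List α)` overrides core's `≤` on lists, so core's
`List.cons_le_cons_iff` does not apply to it directly; both are `¬ l' < l`. -/
theorem List.cons_le_cons_iff' {α : Type*} [LinearOrder α] {a b : α} {l l' : List α} :
    a :: l ≤ b :: l' ↔ a < b ∨ a = b ∧ l ≤ l' := by
  rw [← not_lt, ← not_lt]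
  exact List.cons_le_cons_iff

theorem List.IsPrefix.of_le_of_le {α : Type*} [LinearOrder α] {Q u v w : List α}
    (hu : Q <+: u) (hv : Q <+: v) (huw : u ≤ w) (hwv : w ≤ v) : Q <+: w := by
  induction Q generalizing u v w with
  | nil => exact List.nil_prefix
  | cons a Q ih =>
    obtain ⟨u', rfl⟩ := hu
    obtain ⟨v', rfl⟩ := hv
    cases w with
    | nil => exact absurd (List.nil_lt_cons _ _) (not_lt.mpr huw)
    | cons b w' =>
      rw [List.cons_append, List.cons_le_cons_iff'] at huw hwv
      rcases huw with hab | ⟨rfl, huw⟩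
      · rcases hwv with hba | ⟨rfl, _⟩
        · exact absurd (hab.trans hba) (lt_irrefl a)
        · exact absurd hab (lt_irrefl b)
      · rcases hwv with hba | ⟨-, hwv⟩
        · exact absurd hba (lt_irrefl a)
        · exact (List.prefix_cons_inj a).mpr (ih ⟨u', rfl⟩ ⟨v', rfl⟩ huw hwv)

theorem stmt10_general {α : Type*} [LinearOrder α]
    (SAA : ℕ → Set (List α)) (Q : List α) (i i' : ℕ)
    (hsorted : ∀ k k' : ℕ, k < k' → ∀ u ∈ SAA k, ∀ v ∈ SAA k', u ≤ v)
    (hnei : (SAA i).Nonempty) (hnei' : (SAA i').Nonempty)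
    (hi : ∀ u ∈ SAA i, Q <+: u) (hi' : ∀ u ∈ SAA i', Q <+: u) :
    ∀ k, i ≤ k → k ≤ i' → ∀ w ∈ SAA k, Q <+: w := by
  intro k hik hki' w hw
  obtain ⟨u, hu⟩ := hnei
  obtain ⟨v, hv⟩ := hnei'
  rcases hik.eq_or_lt with rfl | hik
  · exact hi w hw
  rcases hki'.eq_or_lt with rfl | hki'
  · exact hi' w hw
  exact (hi u hu).of_le_of_le (hi' v hv) (hsorted i k hik u hu w hw) (hsorted k i' hki' w hw v hv)

/-- `SAA` models the lexicographically sorted array of a-suffixes: `SAA k` is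
the set of (strings of the) suffixes represented by entry `k`, and entries are
sorted lexicographically.  If every suffix in entry `i` and every suffix in
entry `i'` (`i ≠ i'`, both entries nonempty) is prefixed by `Q`, then for
every entry `k` between `i` and `i'`, every suffix in `SAA k` is prefixed by
`Q`. -/
theorem stmt10 {α : Type*} [LinearOrder α]
    (SAA : ℕ → Set (List α)) (Q : List α) (i i' : ℕ)
    (hsorted : ∀ k k' : ℕ, k < k' → ∀ u ∈ SAA k, ∀ v ∈ SAA k', u ≤ v)
    (hne : i ≠ i') (hii' : i ≤ i')
    (hnei : (SAA i).Nonempty) (hnei' : (SAA i').Nonempty)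
    (hi : ∀ u ∈ SAA i, Q <+: u) (hi' : ∀ u ∈ SAA i', Q <+: u) :
    ∀ k, i ≤ k → k ≤ i' → ∀ w ∈ SAA k, Q <+: w :=
  stmt10_general SAA Q i i' hsorted hnei hnei' hi hi'
end

section
/- In the right-justified transformed alignment, if S̃ʲ[q−1] is empty (a gap) for some string j and some position q in a ps-region block, then S̃ʲ[q'] for q' the largest non-gap position before q is the last character of the preceding cs-region, and the suffix (j,q) is prefixed by α̃⁺ of that block. -/
/-!
Since cs-regions contain no gaps, every position strictly between `q'` and `q` lies in a
ps-region, and a block index that moves by steps of `0` or `1` through odd values only is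
constant there; right-justification forbids `q'` to lie in that same block, so `q'` ends the
preceding cs-region. Consequently every position of the block before `q` is a gap, and since the
block is an interval of positions, its content `α̃⁺ ++ Δʲ` is a prefix of the suffix `(j,q)`.
-/

/-- `β` occurs in `S` at position `i`. -/
def occursAt {α : Type*} (S β : List α) (i : ℕ) : Prop :=
  i + β.length ≤ S.length ∧ β <+: S.drop i

/-- The string formed by the non-gap characters of `St` at positions `≥ q`
(alignment length `n`): the suffix `(j,q)`. -/
def suffixStr {α : Type*} (St : ℕ → Option α) (n q : ℕ) : List α :=
  (List.Ico q n).filterMap St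

/-- The non-gap characters of `St` lying in block `b`. -/
def blockContent {α : Type*} (blk : ℕ → ℕ) (St : ℕ → Option α) (n b : ℕ) :
    List α :=
  ((List.range n).filter (fun i => blk i = b)).filterMap St

theorem List.filter_prefix_of_pairwise {α : Type*} {l : List α} {p : α → Bool}
    (h : l.Pairwise fun a b => p b → p a) : l.filter p <+: l := by
  induction l with
  | nil => exact List.nil_prefix
  | cons a l ih =>
    rw [List.pairwise_cons] at h
    by_cases ha : p a
    · rw [List.filter_cons_of_pos ha]
      exact (List.prefix_cons_inj a).mpr (ih h.2)
    · rw [List.filter_cons_of_neg ha, List.filter_eq_nil_iff.mpr fun b hb hpb => ha (h.1 b hb hpb)]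
      exact List.nil_prefix

section UnitStep

variable {f : ℕ → ℕ}

theorem monotone_of_succ_eq_or_eq_add_one (hf : ∀ i, f (i + 1) = f i ∨ f (i + 1) = f i + 1) :
    Monotone f :=
  monotone_nat_of_le_succ fun i => by rcases hf i with h | h <;> omega

theorem eq_of_step_of_forall_odd (hf : ∀ i, f (i + 1) = f i ∨ f (i + 1) = f i + 1) {a b : ℕ}
    (hab : a ≤ b) (hodd : ∀ r, a ≤ r → r ≤ b → Odd (f r)) : f a = f b := by
  induction b, hab using Nat.le_induction with
  | base => rfl
  | succ b hab ih =>
    rw [ih fun r h1 h2 => hodd r h1 (by omega)]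
    rcases hf b with h | h
    · exact h.symm
    · have hb := hodd b hab (by omega)
      have hb1 := hodd (b + 1) (by omega) le_rfl
      rw [h, Nat.odd_add_one] at hb1
      exact absurd hb hb1

end UnitStep

section Alignment

variable {α : Type*} {blk : ℕ → ℕ} {S : ℕ → Option α} {n q q' : ℕ}

theorem lastNonGap_in_preceding_block
    (hstep : ∀ i, blk (i + 1) = blk i ∨ blk (i + 1) = blk i + 1)
    (hcs : ∀ i, i < n → Even (blk i) → S i ≠ none)
    (hrj : ∀ i i', i < n → i' < n → blk i = blk i' → ¬ Even (blk i) → i ≤ i' →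
      S i ≠ none → S i' ≠ none)
    (hqn : q < n) (hodd : ¬ Even (blk q)) (hgap : S (q - 1) = none)
    (hlast : lastNonGap S q q') :
    Even (blk q') ∧ blk q = blk q' + 1 := by
  obtain ⟨hq'q, hq'ne, hbetween⟩ := hlast
  have hq' : q' + 1 ≤ q - 1 := by
    have : q' ≠ q - 1 := fun h => hq'ne (h ▸ hgap)
    omega
  have hodd_after : ∀ r, q' + 1 ≤ r → r ≤ q → Odd (blk r) := by
    intro r h1 h2
    rw [← Nat.not_even_iff_odd]
    rcases h2.lt_or_eq with h2 | rfl
    · exact fun he => hcs r (by omega) he (hbetween r (by omega) h2)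
    · exact hodd
  have hblk_pred : blk (q' + 1) = blk (q - 1) :=
    eq_of_step_of_forall_odd hstep hq' fun r h1 h2 => hodd_after r h1 (by omega)
  have hblk_q : blk (q' + 1) = blk q := eq_of_step_of_forall_odd hstep (by omega) hodd_after
  rcases hstep q' with h | h
  · exact absurd hgap (hrj q' (q - 1) (by omega) (by omega) (h.symm.trans hblk_pred)
      (h ▸ hblk_q ▸ hodd) (by omega) hq'ne)
  · have hodd' := hblk_q ▸ hodd
    rw [h, Nat.even_add_one, not_not] at hodd'
    exact ⟨hodd', hblk_q ▸ h⟩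

theorem blockContent_prefix_suffixStr (hmono : Monotone blk) (hqn : q ≤ n)
    (hgaps : ∀ i < q, blk i = blk q → S i = none) :
    blockContent blk S n (blk q) <+: suffixStr S n q := by
  unfold blockContent suffixStr
  rw [← List.Ico.zero_bot, ← List.Ico.append_consecutive (Nat.zero_le q) hqn, List.filter_append,
    List.filterMap_append, List.filterMap_eq_nil_iff.mpr ?_, List.nil_append]
  · refine (List.filter_prefix_of_pairwise ?_).filterMap S
    refine (List.Ico.pairwise_lt q n).imp_of_mem fun ha hb hab hpb => ?_
    rw [List.Ico.mem] at ha hb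
    simp only [decide_eq_true_eq] at hpb ⊢
    exact le_antisymm (hpb ▸ hmono hab.le) (hmono ha.1)
  · intro i hi
    rw [List.mem_filter, List.Ico.mem, decide_eq_true_eq] at hi
    exact hgaps i hi.1.2 hi.2

end Alignment

theorem stmt16_general {α : Type*} (m n : ℕ) (Stilde : Fin m → ℕ → Option α)
    (blk : ℕ → ℕ) (aplus : ℕ → List α)
    (hstep : ∀ i, blk (i + 1) = blk i ∨ blk (i + 1) = blk i + 1)
    (hcs : ∀ (j : Fin m) i, i < n → Even (blk i) → Stilde j i ≠ none)
    (hrj : ∀ (j : Fin m) i i', i < n → i' < n → blk i = blk i' →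
        ¬ Even (blk i) → i ≤ i' → Stilde j i ≠ none → Stilde j i' ≠ none)
    (hcontent : ∀ (j : Fin m) b, ¬ Even b →
        ∃ δ : List α, blockContent blk (Stilde j) n b = aplus b ++ δ) :
    ∀ (j : Fin m) (q q' : ℕ), 0 < q → q < n → ¬ Even (blk q) →
      Stilde j (q - 1) = none →
      lastNonGap (Stilde j) q q' →
      (Even (blk q') ∧ blk q = blk q' + 1) ∧
      aplus (blk q) <+: suffixStr (Stilde j) n q := by
  intro j q q' _ hqn hodd hgap hlast
  have hmono := monotone_of_succ_eq_or_eq_add_one hstep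
  have hblocks := lastNonGap_in_preceding_block hstep (hcs j) (hrj j) hqn hodd hgap hlast
  refine ⟨hblocks, ?_⟩
  have hgaps : ∀ i < q, blk i = blk q → Stilde j i = none := fun i hi hib =>
    hlast.2.2 i (lt_of_not_ge fun hiq' => by have := hmono hiq'; omega) hi
  obtain ⟨δ, hδ⟩ := hcontent j (blk q) hodd
  exact (hδ ▸ List.prefix_append _ _).trans (blockContent_prefix_suffixStr hmono hqn.le hgaps)

/-- In the right-justified transformed alignment (blocks alternate: even block
indices are cs-regions, odd are ps-regions; in a ps-region each string is
`α̃⁺ ++ Δʲ` pushed to the right, where `α̃⁺` of the block is nonempty and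
occurs exactly once in each string): if `S̃ʲ[q-1]` is a gap for some position
`q` in a ps-region block, then the largest non-gap position `q'` before `q` is
the last position of the preceding cs-region, and the suffix `(j,q)` is
prefixed by the `α̃⁺` of that block. -/
theorem stmt16 {α : Type*} (m n : ℕ) (Stilde : Fin m → ℕ → Option α)
    (blk : ℕ → ℕ) (aplus : ℕ → List α)
    (hblk0 : blk 0 = 0)
    (hstep : ∀ i, blk (i + 1) = blk i ∨ blk (i + 1) = blk i + 1)
    (hcs : ∀ (j : Fin m) i, i < n → Even (blk i) → Stilde j i ≠ none)
    (hrj : ∀ (j : Fin m) i i', i < n → i' < n → blk i = blk i' →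
        ¬ Even (blk i) → i ≤ i' → Stilde j i ≠ none → Stilde j i' ≠ none)
    (haplus_ne : ∀ b, ¬ Even b → aplus b ≠ [])
    (hcontent : ∀ (j : Fin m) b, ¬ Even b →
        ∃ δ : List α, blockContent blk (Stilde j) n b = aplus b ++ δ)
    (honce : ∀ (j : Fin m) b, ¬ Even b →
        ∃! i, occursAt (suffixStr (Stilde j) n 0) (aplus b) i) :
    ∀ (j : Fin m) (q q' : ℕ), 0 < q → q < n → ¬ Even (blk q) →
      Stilde j (q - 1) = none →
      lastNonGap (Stilde j) q q' →
      (Even (blk q') ∧ blk q = blk q' + 1) ∧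
      aplus (blk q) <+: suffixStr (Stilde j) n q :=
  stmt16_general m n Stilde blk aplus hstep hcs hrj hcontent
end

section
/- The LF-mapping restricted to a fixed character σ is monotone: if (σ,i) and (σ,i') are pairs in 𝓛 with i < i', then LF(σ,i) ≤ LF(σ,i'), with equality only when both pairs are of (m:1)-type mapped to the same F-entry. -/
/-!
Write `(σ,i)` and `(σ,i')` as `L`-entries of suffixes `s` and `t`. Since the SAA is sorted
and its entries are distinct, `i < i'` gives `str s < str t`; prepending the common character
`σ` preserves this, so `str (prev s) < str (prev t)`, and sortedness turns this back into
`LF σ i = ent (prev s) < ent (prev t) = LF σ i'`: the map is even strictly monotone.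
-/

section SortedIndex

variable {β γ ι : Type*} {valid : β → Prop} {str : β → γ} {ent : β → ι} {s t : β}

theorem ent_lt_of_str_lt [Preorder γ] [LinearOrder ι]
    (hsorted : ∀ s t, valid s → valid t → ent s ≤ ent t → str s ≤ str t)
    (hs : valid s) (ht : valid t) (h : str s < str t) : ent s < ent t :=
  lt_of_not_ge fun hle => (hsorted t s ht hs hle).not_gt h

theorem str_lt_of_ent_lt [PartialOrder γ] [Preorder ι]
    (hsorted : ∀ s t, valid s → valid t → ent s ≤ ent t → str s ≤ str t)
    (hdistinct : ∀ s t, valid s → valid t → ent s ≠ ent t → str s ≠ str t)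
    (hs : valid s) (ht : valid t) (h : ent s < ent t) : str s < str t :=
  (hsorted s t hs ht h.le).lt_of_ne (hdistinct s t hs ht h.ne)

end SortedIndex

/-- Model of the FM-index of alignment: suffixes of the `m` strings are pairs `(j,q)`;
`valid s` says `s` is a suffix appearing in the SAA, `str s` is its string, `ent s` is the
index of its SAA entry; for an `extendable` suffix (one not starting at the beginning),
`prev s` is the suffix extended to the left by the character `lastChar s`. `Lpair σ i` means
`(σ,i) ∈ 𝓛`, i.e. `σ ∈ L[i]`. -/
theorem stmt17_general {α : Type*} [LinearOrder α] (m : ℕ)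
    (valid : Fin m × ℕ → Prop) (str : Fin m × ℕ → List α)
    (ent : Fin m × ℕ → ℕ) (extendable : Fin m × ℕ → Prop)
    (prev : Fin m × ℕ → Fin m × ℕ) (lastChar : Fin m × ℕ → α)
    (LF : α → ℕ → ℕ) (Lpair : α → ℕ → Prop)
    (hprevvalid : ∀ s, valid s → extendable s → valid (prev s))
    (hprevstr : ∀ s, valid s → extendable s →
        str (prev s) = lastChar s :: str s)
    (hsorted : ∀ s t, valid s → valid t → ent s ≤ ent t → str s ≤ str t)
    (hdistinct : ∀ s t, valid s → valid t → ent s ≠ ent t → str s ≠ str t)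
    (hLF : ∀ s, valid s → extendable s → LF (lastChar s) (ent s) = ent (prev s))
    (hLpair : ∀ σ i, Lpair σ i ↔
        ∃ s, valid s ∧ extendable s ∧ ent s = i ∧ lastChar s = σ) :
    ∀ (σ : α) (i i' : ℕ), Lpair σ i → Lpair σ i' → i < i' →
      LF σ i ≤ LF σ i' ∧
      (LF σ i = LF σ i' →
        (∃ k, k ≠ i ∧ Lpair σ k ∧ LF σ k = LF σ i) ∧
        (∃ k, k ≠ i' ∧ Lpair σ k ∧ LF σ k = LF σ i')) := by
  intro σ i i' hi hi' hlt
  obtain ⟨s, hsv, hse, rfl, rfl⟩ := (hLpair σ i).1 hi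
  obtain ⟨t, htv, hte, rfl, hts⟩ := (hLpair _ i').1 hi'
  have hstr : str s < str t := str_lt_of_ent_lt hsorted hdistinct hsv htv hlt
  have hprev_str : str (prev s) < str (prev t) := by
    rw [hprevstr s hsv hse, hprevstr t htv hte, hts]
    exact List.cons_lt_cons_self.2 hstr
  have hLF_lt : LF (lastChar s) (ent s) < LF (lastChar s) (ent t) := by
    rw [hLF s hsv hse, ← hts, hLF t htv hte]
    exact ent_lt_of_str_lt hsorted (hprevvalid s hsv hse) (hprevvalid t htv hte) hprev_str
  exact ⟨hLF_lt.le, fun h => absurd h hLF_lt.ne⟩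

/-- Monotonicity of the LF-mapping for a fixed character.  Abstract model of
the FM-index of alignment: suffixes of the `m` strings are pairs `(j,q)`;
`valid s` says `s` is a suffix appearing in the SAA, `str s` is its string,
`ent s` is the index of its SAA entry (entries are sorted lexicographically
and distinct entries contain distinct strings); for an `extendable` suffix
(one not starting at the beginning), `prev s` is the suffix extended to the
left by one character `lastChar s`.  `Lpair σ i` means `(σ,i) ∈ 𝓛`, i.e.,
`σ ∈ L[i]`, and `LF σ (ent s) = ent (prev s)` (well-defined by Lemma 1).

Claim: if `(σ,i)` and `(σ,i')` are pairs in `𝓛` with `i < i'`, then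
`LF σ i ≤ LF σ i'`, with equality only when both pairs are of (m:1)-type
mapped to the same `F`-entry. -/
theorem stmt17 {α : Type*} [LinearOrder α] (m N : ℕ)
    (valid : Fin m × ℕ → Prop) (str : Fin m × ℕ → List α)
    (ent : Fin m × ℕ → ℕ) (extendable : Fin m × ℕ → Prop)
    (prev : Fin m × ℕ → Fin m × ℕ) (lastChar : Fin m × ℕ → α)
    (LF : α → ℕ → ℕ) (Lpair : α → ℕ → Prop)
    (hentN : ∀ s, valid s → ent s ≤ N)
    (hprevvalid : ∀ s, valid s → extendable s → valid (prev s))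
    (hprevstr : ∀ s, valid s → extendable s →
        str (prev s) = lastChar s :: str s)
    (hsorted : ∀ s t, valid s → valid t → ent s ≤ ent t → str s ≤ str t)
    (hdistinct : ∀ s t, valid s → valid t → ent s ≠ ent t → str s ≠ str t)
    (hLF : ∀ s, valid s → extendable s → LF (lastChar s) (ent s) = ent (prev s))
    (hLpair : ∀ σ i, Lpair σ i ↔
        ∃ s, valid s ∧ extendable s ∧ ent s = i ∧ lastChar s = σ) :
    ∀ (σ : α) (i i' : ℕ), Lpair σ i → Lpair σ i' → i < i' →
      LF σ i ≤ LF σ i' ∧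
      (LF σ i = LF σ i' →
        (∃ k, k ≠ i ∧ Lpair σ k ∧ LF σ k = LF σ i) ∧
        (∃ k, k ≠ i' ∧ Lpair σ k ∧ LF σ k = LF σ i')) :=
  stmt17_general m valid str ent extendable prev lastChar LF Lpair hprevvalid hprevstr hsorted
    hdistinct hLF hLpair
end

section
/- If a pattern occurrence range in the SAA has size greater than one (First_ℓ < Last_ℓ), then every suffix contained in every entry of SAA[First_ℓ..Last_ℓ] is prefixed by P[ℓ..p]; only when the range has size exactly one can an entry contain suffixes not prefixed by P[ℓ..p]. -/
theorem stmt19_general {α : Type*} [LinearOrder α]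
    (SAA : ℕ → Set (List α)) (Q : List α) (First Last : ℕ)
    (hsorted : ∀ k k' : ℕ, k < k' → ∀ u ∈ SAA k, ∀ v ∈ SAA k', u ≤ v)
    (hkey : ∀ k k' : ℕ, k ≠ k' → ∀ u ∈ SAA k, ∀ u' ∈ SAA k',
        Q <+: u → Q <+: u' → ∀ v ∈ SAA k, Q <+: v)
    (hFirst : ∃ u ∈ SAA First, Q <+: u)
    (hLast : ∃ u ∈ SAA Last, Q <+: u) :
    First < Last →
      ∀ k, First ≤ k → k ≤ Last → ∀ u ∈ SAA k, Q <+: u := by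
  intro hlt k hFk hkL u hu
  obtain ⟨u₀, hu₀, hQu₀⟩ := hFirst
  obtain ⟨v₀, hv₀, hQv₀⟩ := hLast
  rcases hFk.eq_or_lt with rfl | hFk
  · exact hkey _ _ hlt.ne u₀ hu₀ v₀ hv₀ hQu₀ hQv₀ u hu
  rcases hkL.eq_or_lt with rfl | hkL
  · exact hkey _ _ hlt.ne' v₀ hv₀ u₀ hu₀ hQv₀ hQu₀ u hu
  exact hQu₀.of_le_of_le hQv₀ (hsorted _ _ hFk u₀ hu₀ u hu) (hsorted _ _ hkL u hu v₀ hv₀)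

/-- `SAA` models the sorted array of a-suffixes (`SAA k` = set of suffix
strings of entry `k`, entries sorted lexicographically); `Q` stands for
`P[ℓ..p]` and `(First, Last)` is the maximal range of entries containing some
suffix prefixed by `Q`.  Key fact from the a-suffix grouping (hypothesis
`hkey`): if suffixes in two distinct entries are both prefixed by `Q`, then
all suffixes in both entries are prefixed by `Q`.

Claim: if the range has size greater than one (`First < Last`), then every
suffix contained in every entry of `SAA[First..Last]` is prefixed by `Q`. -/
theorem stmt19 {α : Type*} [LinearOrder α]
    (SAA : ℕ → Set (List α)) (Q : List α) (First Last : ℕ)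
    (hsorted : ∀ k k' : ℕ, k < k' → ∀ u ∈ SAA k, ∀ v ∈ SAA k', u ≤ v)
    (hkey : ∀ k k' : ℕ, k ≠ k' → ∀ u ∈ SAA k, ∀ u' ∈ SAA k',
        Q <+: u → Q <+: u' → ∀ v ∈ SAA k, Q <+: v)
    (hFirst : ∃ u ∈ SAA First, Q <+: u)
    (hLast : ∃ u ∈ SAA Last, Q <+: u)
    (hmax : ∀ k, (∃ u ∈ SAA k, Q <+: u) → First ≤ k ∧ k ≤ Last) :
    First < Last →
      ∀ k, First ≤ k → k ≤ Last → ∀ u ∈ SAA k, Q <+: u :=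
  stmt19_general SAA Q First Last hsorted hkey hFirst hLast
end
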